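/- Let Q be an NQPR in dimension d ≥ 2 that is group covariant, i.e., for all indices j, k there exist a d×d unitary matrix U and a permutation σ of the index set with σ(j) = k and U Q_i U† = Q_{σ(i)} for all i. Then min_j λ_min(Q_j) = −((d−1)√(d+1) − 1)/d holds if and only if there exists a SIC Π_1, …, Π_{d²} in dimension d such that Q_j = −√(d+1)·Π_j + ((1 + √(d+1))/d)·I for every j. -/

import Mathlib

/-!
Write `s = √(d + 1)` and `μ = (1 + s) / d`. For a Hermitian `Q` with `tr Q = 1` and `tr Q² = d`
the eigenvalues `e` satisfy `∑ (eᵢ - μ)² = tr (Q - μ)² = d + 1 = s²`, so each eigenvalue is at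
least `μ - s`, and one of them equals `μ - s` only if all the others equal `μ`, i.e. only if
`(Q - (μ - s)) (Q - μ) = 0`. Covariance transports this quadratic relation from the `Q_j` attaining
the minimum to every `Q_j`, and then `Π_j = (μ - Q_j) / s` are projectors whose traces are read off
from those of the NQPR. Conversely, `Q_j = μ - s Π_j` satisfies the quadratic relation, so its
eigenvalues lie in `{μ - s, μ}`, and the identity `∑ (eᵢ - μ)² = s²` forces `μ - s` to occur.
-/

open Matrix

section SumSq

variable {ι : Type*} [Fintype ι] {e : ι → ℝ} {c r : ℝ}

lemma sub_le_of_sum_sub_sq_eq (hr : 0 ≤ r) (h : ∑ k, (e k - c) ^ 2 = r ^ 2) (i : ι) :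
    c - r ≤ e i := by
  have : (e i - c) ^ 2 ≤ r ^ 2 :=
    h ▸ Finset.single_le_sum (fun k _ => sq_nonneg (e k - c)) (Finset.mem_univ i)
  linarith [(abs_le_of_sq_le_sq' this hr).1]

lemma sub_mul_sub_eq_zero_of_sum_sub_sq_eq (h : ∑ k, (e k - c) ^ 2 = r ^ 2) {i : ι}
    (hi : e i = c - r) (k : ι) : (e k - (c - r)) * (e k - c) = 0 := by
  classical
  rcases eq_or_ne k i with rfl | hk
  · simp [hi]
  have hrest : ∑ l ∈ Finset.univ.erase i, (e l - c) ^ 2 = 0 := by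
    rw [← Finset.add_sum_erase _ _ (Finset.mem_univ i), hi] at h
    linarith
  have hk' := (Finset.sum_eq_zero_iff_of_nonneg fun l _ => sq_nonneg (e l - c)).1 hrest k
    (Finset.mem_erase.2 ⟨hk, Finset.mem_univ k⟩)
  simp [sub_eq_zero.1 (pow_eq_zero_iff two_ne_zero |>.1 hk')]

lemma exists_eq_sub_of_sum_sub_sq_eq (hr : r ≠ 0) (h : ∑ k, (e k - c) ^ 2 = r ^ 2)
    (hroots : ∀ k, (e k - (c - r)) * (e k - c) = 0) : ∃ i, e i = c - r := by
  by_contra! hne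
  have hc : ∀ k, e k = c := fun k => by
    simpa [sub_eq_zero, hne k] using hroots k
  simp [hc, eq_comm, hr] at h

end SumSq

namespace Matrix.IsHermitian

variable {𝕜 : Type*} [RCLike 𝕜] {n : Type*} [Fintype n] [DecidableEq n] {A : Matrix n n 𝕜}

lemma trace_cfc (hA : A.IsHermitian) (f : ℝ → ℝ) :
    (cfc f A).trace = ∑ i, (f (hA.eigenvalues i) : 𝕜) := by
  rw [hA.cfc_eq, IsHermitian.cfc, Unitary.conjStarAlgAut_apply, trace_mul_cycle,
    Unitary.coe_star_mul_self, one_mul, trace_diagonal]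
  rfl

lemma cfc_sub_mul_sub (hA : A.IsHermitian) (a b : ℝ) :
    cfc (fun x => (x - a) * (x - b)) A = (A - (a : 𝕜) • 1) * (A - (b : 𝕜) • 1) := by
  rw [cfc_mul (fun x => x - a) (fun x => x - b) A, cfc_sub (fun x => x) (fun _ => a) A,
    cfc_sub (fun x => x) (fun _ => b) A, cfc_id' ℝ A, cfc_const a A, cfc_const b A,
    Algebra.algebraMap_eq_smul_one, Algebra.algebraMap_eq_smul_one,
    RCLike.real_smul_eq_coe_smul (K := 𝕜), RCLike.real_smul_eq_coe_smul (K := 𝕜)]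

lemma sub_smul_one_mul_sub_smul_one_eq_zero_iff (hA : A.IsHermitian) (a b : ℝ) :
    (A - (a : 𝕜) • 1) * (A - (b : 𝕜) • 1) = 0 ↔
      ∀ i, (hA.eigenvalues i - a) * (hA.eigenvalues i - b) = 0 := by
  rw [← hA.cfc_sub_mul_sub, ← cfc_zero ℝ A, cfc_eq_cfc_iff_eqOn,
    hA.spectrum_real_eq_range_eigenvalues, Set.eqOn_range]
  exact funext_iff

end Matrix.IsHermitian

lemma Unitary.conj_sub_smul_one_mul_sub_smul_one_eq_zero_iff {S R : Type*} [CommRing S] [Ring R]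
    [StarRing R] [Algebra S R] {u : R} (hu : u ∈ unitary R) (x : R) (a b : S) :
    (u * x * star u - a • 1) * (u * x * star u - b • 1) = 0 ↔ (x - a • 1) * (x - b • 1) = 0 := by
  let φ := conjStarAlgAut S R ⟨u, hu⟩
  have hφ : φ ((x - a • 1) * (x - b • 1)) =
      (u * x * star u - a • 1) * (u * x * star u - b • 1) := by
    rw [map_mul, map_sub, map_sub, map_smul, map_smul, map_one]
    rfl
  rw [← hφ, map_eq_zero_iff φ φ.injective]

lemma sub_smul_one_mul_sub_smul_one_of_eq {R A : Type*} [CommRing R] [Ring A] [Algebra R A]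
    {P Q : A} {c m : R} (h : Q = -c • P + m • 1) :
    (Q - (m - c) • 1) * (Q - m • 1) = c ^ 2 • (P * P - P) := by
  subst h
  simp only [sub_mul, mul_sub, add_mul, mul_add, smul_mul_assoc, mul_smul_comm, one_mul,
    mul_one]
  module

noncomputable def sicOffset (d : ℕ) : ℝ := (1 + √(d + 1)) / d

lemma sicOffset_sub_sqrt {d : ℕ} (hd : d ≠ 0) :
    sicOffset d - √(d + 1) = -((((d : ℝ) - 1) * √(d + 1) - 1) / d) := by
  unfold sicOffset
  field_simp
  ring

lemma natCast_mul_sicOffset_sub_one {d : ℕ} (hd : d ≠ 0) : d * sicOffset d - 1 = √(d + 1) := by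
  unfold sicOffset
  field_simp
  ring

lemma natCast_mul_sicOffset_sq_sub_two_mul {d : ℕ} (hd : d ≠ 0) :
    d * sicOffset d ^ 2 - 2 * sicOffset d = 1 := by
  have hs : √((d : ℝ) + 1) ^ 2 = d + 1 := Real.sq_sqrt (by positivity)
  unfold sicOffset
  field_simp
  linear_combination hs

lemma sum_eigenvalues_sub_sicOffset_sq {𝕜 : Type*} [RCLike 𝕜] {d : ℕ} (hd : d ≠ 0)
    {A : Matrix (Fin d) (Fin d) 𝕜}
    (hA : A.IsHermitian) (htr : A.trace = 1) (hsq : (A * A).trace = d) :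
    ∑ i, (hA.eigenvalues i - sicOffset d) ^ 2 = √(d + 1) ^ 2 := by
  set μ := sicOffset d
  have hμ : ((d * μ ^ 2 - 2 * μ : ℝ) : 𝕜) = 1 := by
    rw [natCast_mul_sicOffset_sq_sub_two_mul hd, RCLike.ofReal_one]
  apply RCLike.ofReal_injective (K := 𝕜)
  calc ((∑ i, (hA.eigenvalues i - μ) ^ 2 : ℝ) : 𝕜)
      = (cfc (fun x => (x - μ) * (x - μ)) A).trace := by
        rw [hA.trace_cfc]
        push_cast
        simp only [sq]
    _ = (A * A).trace - 2 * μ * A.trace + d * μ ^ 2 := by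
        rw [hA.cfc_sub_mul_sub]
        simp only [sub_mul, mul_sub, smul_mul_assoc, mul_smul_comm, one_mul, mul_one, trace_sub,
          trace_smul, trace_one, Fintype.card_fin, smul_eq_mul]
        ring
    _ = ((√(d + 1) ^ 2 : ℝ) : 𝕜) := by
        rw [htr, hsq, Real.sq_sqrt (by positivity)]
        push_cast at hμ ⊢
        linear_combination hμ

lemma exists_sic_of_sub_mul_sub_eq_zero {ι : Type*} [DecidableEq ι] {d : ℕ} (hd : d ≠ 0)
    {Q : ι → Matrix (Fin d) (Fin d) ℂ} (hherm : ∀ j, (Q j).IsHermitian)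
    (htr : ∀ j, (Q j).trace = 1)
    (hpair : ∀ j k, (Q j * Q k).trace = if j = k then (d : ℂ) else 0)
    (hquad : ∀ j,
      (Q j - ((sicOffset d - √(d + 1) : ℝ) : ℂ) • 1) * (Q j - (sicOffset d : ℂ) • 1) = 0) :
    ∃ P : ι → Matrix (Fin d) (Fin d) ℂ,
      (∀ j, (P j).IsHermitian) ∧ (∀ j, P j * P j = P j) ∧ (∀ j, (P j).trace = 1) ∧
      (∀ j k, (P j * P k).trace = ((d : ℂ) * (if j = k then 1 else 0) + 1) / ((d : ℂ) + 1)) ∧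
      (∀ j, Q j = -((√(d + 1) : ℝ) : ℂ) • P j + (sicOffset d : ℂ) • 1) := by
  have htrμ : (d : ℂ) * sicOffset d - 1 = √((d : ℝ) + 1) := by
    exact_mod_cast natCast_mul_sicOffset_sub_one hd
  have hpairμ : (d : ℂ) * sicOffset d ^ 2 - 2 * sicOffset d = 1 := by
    exact_mod_cast natCast_mul_sicOffset_sq_sub_two_mul hd
  set s := √((d : ℝ) + 1)
  set μ := sicOffset d
  have hs : (s : ℂ) ≠ 0 := Complex.ofReal_ne_zero.2 (Real.sqrt_ne_zero'.2 (by positivity))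
  have hs2 : (s : ℂ) ^ 2 = d + 1 := by
    rw [← Complex.ofReal_pow, Real.sq_sqrt (by positivity)]
    push_cast
    ring
  have hQ : ∀ j, Q j = -(s : ℂ) • ((s : ℂ)⁻¹ • ((μ : ℂ) • 1 - Q j)) + (μ : ℂ) • 1 := fun j => by
    rw [smul_smul, neg_mul, mul_inv_cancel₀ hs]
    module
  refine ⟨fun j => (s : ℂ)⁻¹ • ((μ : ℂ) • 1 - Q j), fun j => ?_, fun j => ?_, fun j => ?_,
    fun j k => ?_, hQ⟩
  · exact ((isHermitian_one.smul (Complex.conj_ofReal μ)).sub (hherm j)).smul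
      (by simp [IsSelfAdjoint, Complex.conj_ofReal])
  · have h := hquad j
    rw [Complex.ofReal_sub, sub_smul_one_mul_sub_smul_one_of_eq (hQ j)] at h
    exact sub_eq_zero.1 ((smul_eq_zero.1 h).resolve_left (pow_ne_zero 2 hs))
  · rw [trace_smul, trace_sub, trace_smul, trace_one, htr, Fintype.card_fin, smul_eq_mul,
      smul_eq_mul, mul_comm (μ : ℂ), htrμ, inv_mul_cancel₀ hs]
  · simp only [smul_mul_assoc, mul_smul_comm, sub_mul, mul_sub, one_mul, mul_one, smul_smul,
      trace_smul, trace_sub, trace_one, htr, hpair, Fintype.card_fin, smul_eq_mul]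
    rw [← hs2]
    field_simp
    split_ifs <;> linear_combination hpairμ

theorem stmt_5_general (d : ℕ) (hd : 2 ≤ d)
    (Q : Fin (d ^ 2) → Matrix (Fin d) (Fin d) ℂ)
    (hherm : ∀ j, (Q j).IsHermitian)
    (htr : ∀ j, (Q j).trace = 1)
    (hpair : ∀ j k, (Q j * Q k).trace = if j = k then (d : ℂ) else 0)
    (hcov : ∀ j k : Fin (d ^ 2), ∃ (U : Matrix (Fin d) (Fin d) ℂ)
      (σ : Equiv.Perm (Fin (d ^ 2))),
        U * Uᴴ = 1 ∧ Uᴴ * U = 1 ∧ σ j = k ∧ ∀ i, U * Q i * Uᴴ = Q (σ i)) :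
    (⨅ j, ⨅ i, (hherm j).eigenvalues i) = -((((d : ℝ) - 1) * Real.sqrt (d + 1) - 1) / d) ↔
      ∃ P : Fin (d ^ 2) → Matrix (Fin d) (Fin d) ℂ,
        (∀ j, (P j).IsHermitian) ∧
        (∀ j, P j * P j = P j) ∧
        (∀ j, (P j).trace = 1) ∧
        (∀ j k, (P j * P k).trace =
          ((d : ℂ) * (if j = k then 1 else 0) + 1) / ((d : ℂ) + 1)) ∧
        (∀ j, Q j = -((Real.sqrt (d + 1) : ℂ)) • P j +
          (((1 + Real.sqrt (d + 1)) / d : ℝ) : ℂ) • (1 : Matrix (Fin d) (Fin d) ℂ)) := by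
  have hd0 : d ≠ 0 := by omega
  have : NeZero d := ⟨hd0⟩
  have hsum j := sum_eigenvalues_sub_sicOffset_sq hd0 (hherm j) (htr j) (by simpa using hpair j j)
  have hroots j := (hherm j).sub_smul_one_mul_sub_smul_one_eq_zero_iff (sicOffset d - √(d + 1))
    (sicOffset d)
  rw [← sicOffset_sub_sqrt hd0]
  constructor
  · intro hmin
    obtain ⟨j₀, hj₀⟩ := exists_eq_ciInf_of_finite (f := fun j => ⨅ i, (hherm j).eigenvalues i)
    obtain ⟨i₀, hi₀⟩ := exists_eq_ciInf_of_finite (f := (hherm j₀).eigenvalues)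
    have hquad₀ := (hroots j₀).2 <|
      sub_mul_sub_eq_zero_of_sum_sub_sq_eq (hsum j₀) (hi₀.trans (hj₀.trans hmin))
    refine exists_sic_of_sub_mul_sub_eq_zero hd0 hherm htr hpair fun j => ?_
    obtain ⟨U, σ, hU, hU', rfl, hUQ⟩ := hcov j₀ j
    rw [← hUQ, ← star_eq_conjTranspose, Unitary.conj_sub_smul_one_mul_sub_smul_one_eq_zero_iff
      (Unitary.mem_iff.2 ⟨hU', hU⟩)]
    exact hquad₀
  · rintro ⟨P, -, hPP, -, -, hQP⟩
    have hmin j : ⨅ i, (hherm j).eigenvalues i = sicOffset d - √(d + 1) := by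
      have hquad := sub_smul_one_mul_sub_smul_one_of_eq (hQP j)
      rw [hPP, sub_self, smul_zero, ← Complex.ofReal_sub] at hquad
      obtain ⟨i, hi⟩ := exists_eq_sub_of_sum_sub_sq_eq (Real.sqrt_ne_zero'.2 (by positivity))
        (hsum j) ((hroots j).1 hquad)
      exact le_antisymm (hi ▸ ciInf_le (Finite.bddBelow_range _) i)
        (le_ciInf (sub_le_of_sum_sub_sq_eq (Real.sqrt_nonneg _) (hsum j)))
    rw [iInf_congr hmin, ciInf_const]

/-- For a group-covariant NQPR `Q` in dimension `d ≥ 2`, the maximal negativity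
`min_j λ_min(Q j) = −((d−1)√(d+1) − 1)/d` is attained iff there is a SIC `Π` such that
`Q j = −√(d+1)·Π j + ((1 + √(d+1))/d)·I` for every `j`. -/
theorem stmt_5 (d : ℕ) (hd : 2 ≤ d)
    (Q : Fin (d ^ 2) → Matrix (Fin d) (Fin d) ℂ)
    (hherm : ∀ j, (Q j).IsHermitian)
    (htr : ∀ j, (Q j).trace = 1)
    (hpair : ∀ j k, (Q j * Q k).trace = if j = k then (d : ℂ) else 0)
    (hsum : ∑ j, Q j = (d : ℂ) • (1 : Matrix (Fin d) (Fin d) ℂ))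
    (hcov : ∀ j k : Fin (d ^ 2), ∃ (U : Matrix (Fin d) (Fin d) ℂ)
      (σ : Equiv.Perm (Fin (d ^ 2))),
        U * Uᴴ = 1 ∧ Uᴴ * U = 1 ∧ σ j = k ∧ ∀ i, U * Q i * Uᴴ = Q (σ i)) :
    (⨅ j, ⨅ i, (hherm j).eigenvalues i) = -((((d : ℝ) - 1) * Real.sqrt (d + 1) - 1) / d) ↔
      ∃ P : Fin (d ^ 2) → Matrix (Fin d) (Fin d) ℂ,
        (∀ j, (P j).IsHermitian) ∧
        (∀ j, P j * P j = P j) ∧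
        (∀ j, (P j).trace = 1) ∧
        (∀ j k, (P j * P k).trace =
          ((d : ℂ) * (if j = k then 1 else 0) + 1) / ((d : ℂ) + 1)) ∧
        (∀ j, Q j = -((Real.sqrt (d + 1) : ℂ)) • P j +
          (((1 + Real.sqrt (d + 1)) / d : ℝ) : ℂ) • (1 : Matrix (Fin d) (Fin d) ℂ)) :=
  stmt_5_general d hd Q hherm htr hpair hcov
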